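/- Let a > b > 0, c = √(a² − b²), δ₁ = √(4a² − b²), O = (0, −c·δ₁/b) and R = 2a²/b. If A, B, C ∈ ℝ² are noncollinear, each lies at distance R from O, and each of the three sidelines AB, BC, CA is tangent to E(a, b), then the centroid G = (A + B + C)/3 satisfies |G − (0, −√(4a⁴ − 5a²b² + b⁴)/(3b))| = 2(a² − b²)/(3b). In particular, over the Brocard-porism family the locus of the centroid X₂ is contained in the circle with that center and radius. -/

import Mathlib

open Real

/-- A point of the Euclidean plane `ℝ²`. -/
noncomputable def pt (x y : ℝ) : EuclideanSpace ℝ (Fin 2) := WithLp.toLp 2 ![x, y]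

/-- The ellipse with semi-axes `p, q` centered at the origin. -/
def ellipse (p q : ℝ) : Set (EuclideanSpace ℝ (Fin 2)) :=
  {z | z 0 ^ 2 / p ^ 2 + z 1 ^ 2 / q ^ 2 = 1}

/-- The line through two points, as a subset of the plane. -/
noncomputable def lineThrough (A B : EuclideanSpace ℝ (Fin 2)) :
    Set (EuclideanSpace ℝ (Fin 2)) :=
  (affineSpan ℝ {A, B} : AffineSubspace ℝ (EuclideanSpace ℝ (Fin 2)))

/-- A line is tangent to a conic if they intersect in exactly one point. -/
def IsTangent (L E : Set (EuclideanSpace ℝ (Fin 2))) : Prop := ∃ p, L ∩ E = {p}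


/-!
Write the vertices as `R z - d i` with `|z| = 1`, so that the circle is the unit circle. The
tangency of the chord through `z` and `w` to the ellipse becomes a symmetric biquadratic relation
`F(z, w) = 0`. As `F(z₁, ·)` has the two roots `z₂, z₃`, Vieta's formulas for the three vertices
give `k z₁z₂z₃ = n (z₁ + z₂ + z₃) + f` for constants `k, n, f` depending only on the ellipse and
the circle. Taking moduli, `|z₁z₂z₃| = 1` puts `z₁ + z₂ + z₃`, hence the centroid, on a fixed
circle; for the Brocard values of `R` and `d` its radius is `2(a² − b²)/(3b)`.
-/

open Complex

noncomputable def toComplex : EuclideanSpace ℝ (Fin 2) ≃ₗᵢ[ℝ] ℂ :=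
  Complex.orthonormalBasisOneI.repr.symm

@[simp]
lemma toComplex_re (X : EuclideanSpace ℝ (Fin 2)) : (toComplex X).re = X 0 := by
  simp [toComplex, Complex.orthonormalBasisOneI_repr_symm_apply]

@[simp]
lemma toComplex_im (X : EuclideanSpace ℝ (Fin 2)) : (toComplex X).im = X 1 := by
  simp [toComplex, Complex.orthonormalBasisOneI_repr_symm_apply]

lemma toComplex_pt (x y : ℝ) : toComplex (pt x y) = x + y * I := by
  apply Complex.ext <;> simp [pt]

/-- The line `u x + v y = w` through `P` and `Q` satisfies `a²u² + b²v² = w²`, the classical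
criterion for tangency to `ellipse a b`. -/
def TangencyEquation (a b : ℝ) (P Q : ℂ) : Prop :=
  b ^ 2 * (Q.re - P.re) ^ 2 + a ^ 2 * (Q.im - P.im) ^ 2 = (P.re * Q.im - P.im * Q.re) ^ 2

lemma lineMap_mem_ellipse_iff {a b : ℝ} (ha : a ≠ 0) (hb : b ≠ 0) (A B : EuclideanSpace ℝ (Fin 2))
    (t : ℝ) :
    AffineMap.lineMap A B t ∈ ellipse a b ↔
      (b ^ 2 * (B 0 - A 0) ^ 2 + a ^ 2 * (B 1 - A 1) ^ 2) * (t * t)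
        + 2 * (b ^ 2 * A 0 * (B 0 - A 0) + a ^ 2 * A 1 * (B 1 - A 1)) * t
        + (b ^ 2 * A 0 ^ 2 + a ^ 2 * A 1 ^ 2 - a ^ 2 * b ^ 2) = 0 := by
  simp only [ellipse, Set.mem_ofPred_eq, AffineMap.lineMap_apply_module, PiLp.add_apply,
    PiLp.smul_apply, smul_eq_mul]
  rw [div_add_div _ _ (pow_ne_zero 2 ha) (pow_ne_zero 2 hb),
    div_eq_one_iff_eq (mul_ne_zero (pow_ne_zero 2 ha) (pow_ne_zero 2 hb))]
  constructor <;> intro h <;> linear_combination h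

lemma tangencyEquation_of_isTangent {a b : ℝ} (ha : a ≠ 0) (hb : b ≠ 0)
    {A B : EuclideanSpace ℝ (Fin 2)} (hAB : A ≠ B)
    (h : IsTangent (lineThrough A B) (ellipse a b)) :
    TangencyEquation a b (toComplex A) (toComplex B) := by
  obtain ⟨p, hp⟩ := h
  have hQ : b ^ 2 * (B 0 - A 0) ^ 2 + a ^ 2 * (B 1 - A 1) ^ 2 ≠ 0 := by
    have hcoord : B 0 - A 0 ≠ 0 ∨ B 1 - A 1 ≠ 0 := by
      by_contra! h
      refine hAB (PiLp.ext fun i => ?_)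
      fin_cases i <;> simp [sub_eq_zero.1 h.1, sub_eq_zero.1 h.2]
    rcases hcoord with h | h <;> positivity
  have hunique : ∃! t : ℝ, AffineMap.lineMap A B t ∈ ellipse a b := by
    have hp' : p ∈ lineThrough A B ∩ ellipse a b := hp.symm ▸ rfl
    obtain ⟨t₀, rfl⟩ := mem_affineSpan_pair_iff_exists_lineMap_eq.1 hp'.1
    refine ⟨t₀, hp'.2, fun t ht => ?_⟩
    have hmem : AffineMap.lineMap A B t ∈ lineThrough A B ∩ ellipse a b :=
      ⟨AffineMap.lineMap_mem_affineSpan_pair _ _ _, ht⟩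
    rw [hp] at hmem
    exact AffineMap.lineMap_injective ℝ hAB hmem
  simp_rw [lineMap_mem_ellipse_iff ha hb] at hunique
  have hdisc := discrim_eq_zero_of_existsUnique hQ hunique
  unfold discrim at hdisc
  have hfactor : 4 * a ^ 2 * b ^ 2 * (b ^ 2 * (B 0 - A 0) ^ 2 + a ^ 2 * (B 1 - A 1) ^ 2
      - (A 0 * B 1 - A 1 * B 0) ^ 2) = 0 := by linear_combination hdisc
  simp only [TangencyEquation, toComplex_re, toComplex_im]
  linear_combination (mul_eq_zero.1 hfactor).resolve_left (by positivity)

def symmBiquadratic {K : Type*} [CommRing K] (k m n e f g z w : K) : K :=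
  k * z ^ 2 * w ^ 2 + m * (z ^ 2 * w + z * w ^ 2) + n * (z ^ 2 + w ^ 2) + e * z * w + f * (z + w) + g

/-- `F(z₁, ·)` is a quadratic with the distinct roots `z₂, z₃`, and `F(z₂, ·)` one with the roots
`z₁, z₃`. Both Vieta relations are linear in `z₁`, resp. `z₂`, with the same symmetric coefficients,
which must therefore vanish. -/
theorem mul_prod_eq_of_symmBiquadratic_eq_zero {K : Type*} [CommRing K] [IsDomain K]
    {k m n e f g z₁ z₂ z₃ : K} (h₁₂ : z₁ ≠ z₂) (h₂₃ : z₂ ≠ z₃) (h₃₁ : z₃ ≠ z₁)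
    (F₁₂ : symmBiquadratic k m n e f g z₁ z₂ = 0) (F₂₃ : symmBiquadratic k m n e f g z₂ z₃ = 0)
    (F₃₁ : symmBiquadratic k m n e f g z₃ z₁ = 0) :
    k * (z₁ * z₂ * z₃) = n * (z₁ + z₂ + z₃) + f := by
  set P := k * (z₁ * z₂ + z₂ * z₃ + z₃ * z₁) + m * (z₁ + z₂ + z₃) - n + e
  set Q := n * (z₁ + z₂ + z₃) + f - k * (z₁ * z₂ * z₃)
  unfold symmBiquadratic at F₁₂ F₂₃ F₃₁
  have hz₁ : P * z₁ + Q = 0 := by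
    have : (z₂ - z₃) * (P * z₁ + Q) = 0 := by linear_combination F₁₂ - F₃₁
    exact (mul_eq_zero.1 this).resolve_left (sub_ne_zero.2 h₂₃)
  have hz₂ : P * z₂ + Q = 0 := by
    have : (z₁ - z₃) * (P * z₂ + Q) = 0 := by linear_combination F₁₂ - F₂₃
    exact (mul_eq_zero.1 this).resolve_left (sub_ne_zero.2 h₃₁.symm)
  have hP : P = 0 := by
    have : P * (z₁ - z₂) = 0 := by linear_combination hz₁ - hz₂
    exact (mul_eq_zero.1 this).resolve_right (sub_ne_zero.2 h₁₂)
  linear_combination z₁ * hP - hz₁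

/-- Once `re z = (z + z⁻¹)/2` and `im z = -i (z - z⁻¹)/2` are substituted, the two sides of the
tangency equation of the chord through `R z - d i` and `R w - d i` differ by
`-R² (z - w)² chordPoly a b R d z w / (8 z² w²)`. -/
noncomputable def chordPoly (a b R d : ℝ) : ℂ → ℂ → ℂ :=
  symmBiquadratic (2 * (a ^ 2 - b ^ 2 + d ^ 2)) (-4 * R * d * I) (-2 * R ^ 2)
    (4 * (a ^ 2 + b ^ 2 - d ^ 2 - R ^ 2)) (4 * R * d * I) (2 * (a ^ 2 - b ^ 2 + d ^ 2))

lemma ofReal_re_of_norm_eq_one {z : ℂ} (hz : ‖z‖ = 1) : (z.re : ℂ) = (z + z⁻¹) / 2 := by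
  rw [Complex.inv_eq_conj hz, Complex.re_eq_add_conj]

lemma ofReal_im_of_norm_eq_one {z : ℂ} (hz : ‖z‖ = 1) : (z.im : ℂ) = -I * (z - z⁻¹) / 2 := by
  rw [Complex.inv_eq_conj hz, Complex.im_eq_sub_conj]
  field_simp
  simp [I_sq]

theorem chordPoly_eq_zero_of_tangencyEquation {a b R d : ℝ} (hR : R ≠ 0) {z w : ℂ}
    (hz : ‖z‖ = 1) (hw : ‖w‖ = 1) (hzw : z ≠ w)
    (h : TangencyEquation a b (R * z - d * I) (R * w - d * I)) :
    chordPoly a b R d z w = 0 := by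
  have hz0 : z ≠ 0 := by rintro rfl; simp at hz
  have hw0 : w ≠ 0 := by rintro rfl; simp at hw
  have hRC : (R : ℂ) ≠ 0 := ofReal_ne_zero.2 hR
  simp only [TangencyEquation, sub_re, mul_re, ofReal_re, ofReal_im, zero_mul, sub_zero, I_re,
    mul_zero, I_im, mul_one, sub_self, sub_im, mul_im, add_zero, sub_sub_sub_cancel_right] at h
  have hC := congrArg (fun x : ℝ => (x : ℂ)) h
  push_cast at hC
  rw [ofReal_re_of_norm_eq_one hz, ofReal_re_of_norm_eq_one hw, ofReal_im_of_norm_eq_one hz,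
    ofReal_im_of_norm_eq_one hw] at hC
  have key : chordPoly a b R d z w * (z - w) ^ 2 = 0 := by
    linear_combination (norm := skip) (-8 * z ^ 2 * w ^ 2 / R ^ 2) * hC
    unfold chordPoly symmBiquadratic
    field_simp
    ring_nf
    simp only [I_sq]
    ring
  exact (mul_eq_zero.1 key).resolve_right (pow_ne_zero 2 (sub_ne_zero.2 hzw))

theorem norm_sum_eq_of_chordPoly_eq_zero {a b R d : ℝ} {z₁ z₂ z₃ : ℂ}
    (h₁ : ‖z₁‖ = 1) (h₂ : ‖z₂‖ = 1) (h₃ : ‖z₃‖ = 1)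
    (h₁₂ : z₁ ≠ z₂) (h₂₃ : z₂ ≠ z₃) (h₃₁ : z₃ ≠ z₁)
    (F₁₂ : chordPoly a b R d z₁ z₂ = 0) (F₂₃ : chordPoly a b R d z₂ z₃ = 0)
    (F₃₁ : chordPoly a b R d z₃ z₁ = 0) :
    |R| * ‖R * (z₁ + z₂ + z₃) - 2 * d * I‖ = |a ^ 2 - b ^ 2 + d ^ 2| := by
  have hV := mul_prod_eq_of_symmBiquadratic_eq_zero h₁₂ h₂₃ h₃₁ F₁₂ F₂₃ F₃₁
  have hV' : ((2 * (a ^ 2 - b ^ 2 + d ^ 2) : ℝ) : ℂ) * (z₁ * z₂ * z₃)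
      = ((-2 * R : ℝ) : ℂ) * (R * (z₁ + z₂ + z₃) - 2 * d * I) := by
    push_cast; linear_combination hV
  have hN := congrArg norm hV'
  simp only [norm_mul, h₁, h₂, h₃, Complex.norm_real, Real.norm_eq_abs, mul_one] at hN
  rw [abs_neg, abs_two] at hN
  linarith

theorem dist_centroid_eq_of_tangent_triangle {a b d R : ℝ} (ha : a ≠ 0) (hb : b ≠ 0) (hR : 0 < R)
    {A B C : EuclideanSpace ℝ (Fin 2)} (hAB : A ≠ B) (hBC : B ≠ C) (hCA : C ≠ A)
    (hA : dist A (pt 0 (-d)) = R) (hB : dist B (pt 0 (-d)) = R) (hC : dist C (pt 0 (-d)) = R)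
    (tAB : IsTangent (lineThrough A B) (ellipse a b))
    (tBC : IsTangent (lineThrough B C) (ellipse a b))
    (tCA : IsTangent (lineThrough C A) (ellipse a b)) :
    dist ((3 : ℝ)⁻¹ • (A + B + C)) (pt 0 (-(d / 3))) = |a ^ 2 - b ^ 2 + d ^ 2| / (3 * R) := by
  have hRC : (R : ℂ) ≠ 0 := ofReal_ne_zero.2 hR.ne'
  set ζ : EuclideanSpace ℝ (Fin 2) → ℂ := fun X => (toComplex X + d * I) / R with hζ
  have toComplex_eq (X : EuclideanSpace ℝ (Fin 2)) : toComplex X = R * ζ X - d * I := by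
    simp only [hζ]; field_simp; ring
  have norm_ζ {X : EuclideanSpace ℝ (Fin 2)} (hX : dist X (pt 0 (-d)) = R) : ‖ζ X‖ = 1 := by
    rw [← toComplex.dist_map, toComplex_pt, Complex.dist_eq] at hX
    simp only [hζ, norm_div, Complex.norm_real, Real.norm_eq_abs, abs_of_pos hR]
    rw [div_eq_one_iff_eq hR.ne', ← hX]
    congr 1; push_cast; ring
  have ζ_injective : Function.Injective ζ := fun X Y h => by
    simpa [hζ, div_left_inj' hRC] using h
  have chord {X Y : EuclideanSpace ℝ (Fin 2)} (hXY : X ≠ Y) (hX : dist X (pt 0 (-d)) = R)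
      (hY : dist Y (pt 0 (-d)) = R) (h : IsTangent (lineThrough X Y) (ellipse a b)) :
      chordPoly a b R d (ζ X) (ζ Y) = 0 := by
    refine chordPoly_eq_zero_of_tangencyEquation hR.ne' (norm_ζ hX) (norm_ζ hY)
      (ζ_injective.ne hXY) ?_
    rw [← toComplex_eq, ← toComplex_eq]
    exact tangencyEquation_of_isTangent ha hb hXY h
  have key := norm_sum_eq_of_chordPoly_eq_zero (norm_ζ hA) (norm_ζ hB) (norm_ζ hC)
    (ζ_injective.ne hAB) (ζ_injective.ne hBC) (ζ_injective.ne hCA)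
    (chord hAB hA hB tAB) (chord hBC hB hC tBC) (chord hCA hC hA tCA)
  rw [← toComplex.dist_map, Complex.dist_eq, map_smul, map_add, map_add, toComplex_pt,
    toComplex_eq A, toComplex_eq B, toComplex_eq C]
  rw [abs_of_pos hR] at key
  have hcentroid : (3 : ℝ)⁻¹ • (R * ζ A - d * I + (R * ζ B - d * I) + (R * ζ C - d * I))
      - ((0 : ℝ) + (-(d / 3) : ℝ) * I) = (3 : ℂ)⁻¹ * (R * (ζ A + ζ B + ζ C) - 2 * d * I) := by
    rw [Complex.real_smul]; push_cast; ring
  rw [hcentroid, norm_mul, norm_inv, Complex.norm_ofNat, eq_div_iff (by positivity), ← key]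
  ring

/-- Over the Brocard porism, the centroid `X₂ = (A + B + C)/3` lies on the circle of
center `(0, −√(4a⁴ − 5a²b² + b⁴)/(3b))` and radius `2(a² − b²)/(3b)`. -/
theorem brocard_porism_centroid_locus (a b c δ₁ R : ℝ) (hab : a > b) (hb : 0 < b)
    (hc : c = Real.sqrt (a ^ 2 - b ^ 2)) (hδ : δ₁ = Real.sqrt (4 * a ^ 2 - b ^ 2))
    (hR : R = 2 * a ^ 2 / b)
    (O : EuclideanSpace ℝ (Fin 2)) (hO : O = pt 0 (-(c * δ₁ / b)))
    (A B C : EuclideanSpace ℝ (Fin 2))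
    (hncol : ¬ Collinear ℝ ({A, B, C} : Set (EuclideanSpace ℝ (Fin 2))))
    (hA : dist A O = R) (hB : dist B O = R) (hC : dist C O = R)
    (tAB : IsTangent (lineThrough A B) (ellipse a b))
    (tBC : IsTangent (lineThrough B C) (ellipse a b))
    (tCA : IsTangent (lineThrough C A) (ellipse a b))
    (G : EuclideanSpace ℝ (Fin 2)) (hG : G = (3 : ℝ)⁻¹ • (A + B + C)) :
    dist G (pt 0 (-(Real.sqrt (4 * a ^ 4 - 5 * a ^ 2 * b ^ 2 + b ^ 4) / (3 * b)))) =
      2 * (a ^ 2 - b ^ 2) / (3 * b) := by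
  have ha : 0 < a := hb.trans hab
  have hab₂ : 0 < a ^ 2 - b ^ 2 := by nlinarith
  have hc₂ : c ^ 2 = a ^ 2 - b ^ 2 := hc ▸ Real.sq_sqrt hab₂.le
  have hδ₂ : δ₁ ^ 2 = 4 * a ^ 2 - b ^ 2 := hδ ▸ Real.sq_sqrt (by nlinarith)
  have hcenter : Real.sqrt (4 * a ^ 4 - 5 * a ^ 2 * b ^ 2 + b ^ 4) / (3 * b) = c * δ₁ / b / 3 := by
    rw [show 4 * a ^ 4 - 5 * a ^ 2 * b ^ 2 + b ^ 4 = (a ^ 2 - b ^ 2) * (4 * a ^ 2 - b ^ 2) by ring,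
      Real.sqrt_mul hab₂.le, ← hc, ← hδ]
    ring
  have hradius : |a ^ 2 - b ^ 2 + (c * δ₁ / b) ^ 2| / (3 * R) = 2 * (a ^ 2 - b ^ 2) / (3 * b) := by
    have : a ^ 2 - b ^ 2 + (c * δ₁ / b) ^ 2 = 4 * a ^ 2 * (a ^ 2 - b ^ 2) / b ^ 2 := by
      field_simp; rw [hc₂, hδ₂]; ring
    rw [this, abs_of_pos (by positivity), hR]
    field_simp; ring
  subst hO hG
  rw [hcenter, ← hradius]
  exact dist_centroid_eq_of_tangent_triangle ha.ne' hb.ne' (hR ▸ by positivity)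
    (ne₁₂_of_not_collinear hncol) (ne₂₃_of_not_collinear hncol)
    (ne₁₃_of_not_collinear hncol).symm hA hB hC tAB tBC tCA
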